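/- Under the rescaling u = x/(c(t−t₀))^{1/2}, v = y/(c(t−t₀))^{3/2}, the CDF of the two-dimensional diffusive shear solution converges, as t → ∞, pointwise to the steady self-similar shape F_{UV}(u',v') = (√3 c²/(π D²)) ∫_{−∞}^{u'} ∫_{−∞}^{v'} exp(−(6(v − u/(2c))² c³/D² + u² c/(2D²))) dv du, which equals the rescaled CDF of the purely x-diffusive self-similar solution. -/

import Mathlib

open Real MeasureTheory Filter Set

/-- Density of the doubly-diffusive shear solution. -/
noncomputable def shearDensity2 (D t₀ x y t : ℝ) : ℝ :=
  1 / (2 * Real.pi * D ^ 2 * (t - t₀) * Real.sqrt (1 + (t - t₀) ^ 2 / 12)) *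
    Real.exp (-((y - x * (t - t₀) / 2) ^ 2 /
        (2 * D ^ 2 * (t - t₀) * (1 + (t - t₀) ^ 2 / 12))
      + x ^ 2 / (2 * D ^ 2 * (t - t₀))))

/-- Density of the purely x-diffusive self-similar solution. -/
noncomputable def shearDensity1 (D t₀ x y t : ℝ) : ℝ :=
  Real.sqrt 3 / (Real.pi * D ^ 2 * (t - t₀) ^ 2) *
    Real.exp (-(6 * (y - x * (t - t₀) / 2) ^ 2 / (D ^ 2 * (t - t₀) ^ 3)
      + x ^ 2 / (2 * D ^ 2 * (t - t₀))))

/-- CDF of the doubly-diffusive solution. -/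
noncomputable def cdf2 (D t₀ x y t : ℝ) : ℝ :=
  ∫ x' in Iic x, ∫ y' in Iic y, shearDensity2 D t₀ x' y' t

/-- CDF of the purely x-diffusive self-similar solution. -/
noncomputable def cdf1 (D t₀ x y t : ℝ) : ℝ :=
  ∫ x' in Iic x, ∫ y' in Iic y, shearDensity1 D t₀ x' y' t

/-- The steady self-similar shape in the rescaled variables. -/
noncomputable def steadyShape (D c u' v' : ℝ) : ℝ :=
  Real.sqrt 3 * c ^ 2 / (Real.pi * D ^ 2) *
    ∫ u in Iic u', ∫ v in Iic v',
      Real.exp (-(6 * (v - u / (2 * c)) ^ 2 * c ^ 3 / D ^ 2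
        + u ^ 2 * c / (2 * D ^ 2)))

/-!
With τ = t − t₀, the substitution x = (cτ)^{1/2} u, y = (cτ)^{3/2} v turns both CDFs into a
prefactor times the integral over `Iic u' ×ˢ Iic v'` of the sheared Gaussian
exp(−(k (v − u/(2c))² + c u²/(2D²))). For the x-diffusive solution the prefactor and the
precision k are independent of τ and are those of the steady shape. For the doubly diffusive
one they tend to √3 c²/(π D²) and 6 c³/D², because τ²/(1 + τ²/12) → 12, and the integral is
continuous in k > 0 by dominated convergence: the sheared Gaussian with precision k/2 is an
integrable majorant, its v-sections integrating to √(π/k) exp(−c u²/(2D²)).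
-/

open Topology

theorem integral_comp_mul_left_Iic {E : Type*} [NormedAddCommGroup E] [NormedSpace ℝ E]
    (g : ℝ → E) (a : ℝ) {b : ℝ} (hb : 0 < b) :
    ∫ x in Iic a, g (b * x) = b⁻¹ • ∫ x in Iic (b * a), g x := by
  rw [← integral_indicator measurableSet_Iic, ← integral_indicator measurableSet_Iic,
    ← abs_of_pos (inv_pos.mpr hb), ← Measure.integral_comp_mul_left]
  congr
  ext1 x
  rw [← indicator_comp_right, preimage_const_mul_Iic₀ _ hb, mul_div_cancel_left₀ _ hb.ne',
    Function.comp_def]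

theorem integral_Iic_integral_Iic_comp_mul (f : ℝ → ℝ → ℝ) {a b : ℝ} (ha : 0 < a) (hb : 0 < b)
    (x y : ℝ) :
    ∫ x' in Iic (a * x), ∫ y' in Iic (b * y), f x' y' =
      ∫ u in Iic x, ∫ v in Iic y, a * b * f (a * u) (b * v) := by
  have hslice : ∀ u, ∫ v in Iic y, a * b * f (a * u) (b * v) =
      a * ∫ y' in Iic (b * y), f (a * u) y' := fun u => by
    rw [integral_const_mul, integral_comp_mul_left_Iic (f (a * u)) y hb, smul_eq_mul]
    field_simp
  simp_rw [hslice, integral_const_mul]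
  rw [integral_comp_mul_left_Iic (fun x' => ∫ y' in Iic (b * y), f x' y') x ha, smul_eq_mul]
  field_simp

noncomputable def shearedGaussian (k σ s : ℝ) (p : ℝ × ℝ) : ℝ :=
  exp (-(k * (p.2 - s * p.1) ^ 2 + σ * p.1 ^ 2))

section ShearedGaussian

variable {k σ : ℝ} (s : ℝ)

theorem shearedGaussian_apply_eq_mul (k σ u v : ℝ) :
    shearedGaussian k σ s (u, v) = exp (-k * (v - s * u) ^ 2) * exp (-σ * u ^ 2) := by
  rw [shearedGaussian, ← exp_add]
  ring_nf

theorem integral_shearedGaussian_slice (u : ℝ) :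
    ∫ v, shearedGaussian k σ s (u, v) = √(π / k) * exp (-σ * u ^ 2) := by
  simp_rw [shearedGaussian_apply_eq_mul, integral_mul_const,
    integral_sub_right_eq_self (fun v => exp (-k * v ^ 2)) (s * u), integral_gaussian]

theorem continuous_shearedGaussian (k σ : ℝ) : Continuous (shearedGaussian k σ s) := by
  unfold shearedGaussian
  fun_prop

theorem continuous_shearedGaussian_precision (σ : ℝ) (p : ℝ × ℝ) :
    Continuous fun k => shearedGaussian k σ s p := by
  unfold shearedGaussian
  fun_prop

theorem shearedGaussian_pos (k σ : ℝ) (p : ℝ × ℝ) : 0 < shearedGaussian k σ s p := exp_pos _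

theorem norm_shearedGaussian (k σ : ℝ) (p : ℝ × ℝ) :
    ‖shearedGaussian k σ s p‖ = shearedGaussian k σ s p :=
  Real.norm_of_nonneg (shearedGaussian_pos s k σ p).le

theorem integrable_shearedGaussian (hk : 0 < k) (hσ : 0 < σ) :
    Integrable (shearedGaussian k σ s) := by
  rw [Measure.volume_eq_prod,
    integrable_prod_iff (continuous_shearedGaussian s k σ).aestronglyMeasurable]
  refine ⟨Eventually.of_forall fun u => ?_, ?_⟩
  · simp_rw [shearedGaussian_apply_eq_mul]
    exact ((integrable_exp_neg_mul_sq hk).comp_sub_right (s * u)).mul_const _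
  · simp_rw [norm_shearedGaussian, integral_shearedGaussian_slice s]
    exact (integrable_exp_neg_mul_sq hσ).const_mul _

theorem setIntegral_prod_shearedGaussian (hk : 0 < k) (hσ : 0 < σ) (S T : Set ℝ) :
    ∫ p in S ×ˢ T, shearedGaussian k σ s p = ∫ u in S, ∫ v in T, shearedGaussian k σ s (u, v) :=
  setIntegral_prod _ (integrable_shearedGaussian s hk hσ).integrableOn

theorem antitone_shearedGaussian (σ : ℝ) (p : ℝ × ℝ) :
    Antitone fun k => shearedGaussian k σ s p := by
  intro k k' hkk'
  simp only [shearedGaussian]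
  gcongr

theorem continuousAt_setIntegral_shearedGaussian (S : Set (ℝ × ℝ)) (hk : 0 < k) (hσ : 0 < σ) :
    ContinuousAt (fun k' => ∫ p in S, shearedGaussian k' σ s p) k := by
  refine continuousAt_of_dominated (bound := shearedGaussian (k / 2) σ s)
    (Eventually.of_forall fun k' => ?_) ?_
    (integrable_shearedGaussian s (half_pos hk) hσ).integrableOn
    (Eventually.of_forall fun p => ?_)
  · exact (continuous_shearedGaussian s k' σ).aestronglyMeasurable
  · filter_upwards [Ioi_mem_nhds (half_lt_self hk)] with k' hk'
    exact Eventually.of_forall fun p => by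
      rw [norm_shearedGaussian]
      exact antitone_shearedGaussian s σ p hk'.le
  · exact (continuous_shearedGaussian_precision s σ p).continuousAt

end ShearedGaussian

theorem rpow_three_halves_eq_mul_sqrt {x : ℝ} (hx : 0 ≤ x) : x ^ ((3 : ℝ) / 2) = x * √x := by
  rw [sqrt_eq_rpow, show (3 : ℝ) / 2 = 1 + 1 / 2 by norm_num, rpow_add' hx (by norm_num),
    rpow_one]

noncomputable def rescaledPrefactor (D c τ : ℝ) : ℝ :=
  c ^ 2 * τ / (2 * π * D ^ 2 * √(1 + τ ^ 2 / 12))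

noncomputable def rescaledPrecision (D c τ : ℝ) : ℝ :=
  c ^ 3 * τ ^ 2 / (2 * D ^ 2 * (1 + τ ^ 2 / 12))

theorem rescaledPrecision_pos {D c τ : ℝ} (hD : D ≠ 0) (hc : 0 < c) (hτ : τ ≠ 0) :
    0 < rescaledPrecision D c τ := by
  unfold rescaledPrecision
  positivity

section Rescaling

variable {D c τ r : ℝ}

theorem mul_shearDensity2_rescaled (hD : D ≠ 0) (hc : c ≠ 0) (hτ : τ ≠ 0) (hr : r ^ 2 = c * τ)
    (t₀ u v : ℝ) :
    r * (c * τ * r) * shearDensity2 D t₀ (r * u) (c * τ * r * v) (t₀ + τ) =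
      rescaledPrefactor D c τ *
        shearedGaussian (rescaledPrecision D c τ) (c / (2 * D ^ 2)) (1 / (2 * c)) (u, v) := by
  have hshear : (c * τ * r * v - r * u * τ / 2) ^ 2 = c * τ * (c * τ * v - u * τ / 2) ^ 2 := by
    linear_combination (c * τ * v - u * τ / 2) ^ 2 * hr
  have hsq : (r * u) ^ 2 = c * τ * u ^ 2 := by linear_combination u ^ 2 * hr
  rw [shearDensity2, shearedGaussian, rescaledPrefactor, rescaledPrecision, add_sub_cancel_left,
    hshear, hsq, ← mul_assoc, ← mul_assoc]
  congr 1
  · field_simp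
    linear_combination hr
  · congr 2
    field_simp

theorem mul_shearDensity1_rescaled (hD : D ≠ 0) (hc : c ≠ 0) (hτ : τ ≠ 0) (hr : r ^ 2 = c * τ)
    (t₀ u v : ℝ) :
    r * (c * τ * r) * shearDensity1 D t₀ (r * u) (c * τ * r * v) (t₀ + τ) =
      √3 * c ^ 2 / (π * D ^ 2) *
        shearedGaussian (6 * c ^ 3 / D ^ 2) (c / (2 * D ^ 2)) (1 / (2 * c)) (u, v) := by
  have hshear : (c * τ * r * v - r * u * τ / 2) ^ 2 = c * τ * (c * τ * v - u * τ / 2) ^ 2 := by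
    linear_combination (c * τ * v - u * τ / 2) ^ 2 * hr
  have hsq : (r * u) ^ 2 = c * τ * u ^ 2 := by linear_combination u ^ 2 * hr
  rw [shearDensity1, shearedGaussian, add_sub_cancel_left, hshear, hsq, ← mul_assoc]
  congr 1
  · field_simp
    linear_combination hr
  · congr 2
    field_simp

end Rescaling

theorem tendsto_sq_div_one_add_sq_div_twelve :
    Tendsto (fun τ : ℝ => τ ^ 2 / (1 + τ ^ 2 / 12)) atTop (𝓝 12) := by
  have hden : Tendsto (fun τ : ℝ => 1 + τ ^ 2 / 12) atTop atTop :=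
    tendsto_atTop_add_const_left _ _
      ((tendsto_pow_atTop two_ne_zero).atTop_div_const (by norm_num))
  have hlim : Tendsto (fun τ : ℝ => 12 - 12 * (1 + τ ^ 2 / 12)⁻¹) atTop (𝓝 (12 - 12 * 0)) :=
    tendsto_const_nhds.sub (hden.inv_tendsto_atTop.const_mul 12)
  rw [mul_zero, sub_zero] at hlim
  refine hlim.congr fun τ => ?_
  field_simp
  ring

section Limits

variable {D : ℝ} (c : ℝ)

theorem tendsto_rescaledPrecision (hD : D ≠ 0) :
    Tendsto (rescaledPrecision D c) atTop (𝓝 (6 * c ^ 3 / D ^ 2)) := by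
  have h := tendsto_sq_div_one_add_sq_div_twelve.const_mul (c ^ 3 / (2 * D ^ 2))
  rw [show c ^ 3 / (2 * D ^ 2) * 12 = 6 * c ^ 3 / D ^ 2 by field_simp; ring] at h
  refine h.congr fun τ => ?_
  rw [rescaledPrecision]
  field_simp

theorem tendsto_rescaledPrefactor (hD : D ≠ 0) :
    Tendsto (rescaledPrefactor D c) atTop (𝓝 (√3 * c ^ 2 / (π * D ^ 2))) := by
  have h := tendsto_sq_div_one_add_sq_div_twelve.sqrt.const_mul (c ^ 2 / (2 * π * D ^ 2))
  rw [show √12 = 2 * √3 by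
      rw [show (12 : ℝ) = 2 ^ 2 * 3 by norm_num, sqrt_mul (by positivity), sqrt_sq zero_le_two],
    show c ^ 2 / (2 * π * D ^ 2) * (2 * √3) = √3 * c ^ 2 / (π * D ^ 2) by field_simp] at h
  refine h.congr' ?_
  filter_upwards [eventually_ge_atTop 0] with τ hτ
  rw [rescaledPrefactor, sqrt_div (sq_nonneg τ), sqrt_sq hτ]
  field_simp

end Limits

theorem steadyShape_eq_integral_shearedGaussian (D c u' v' : ℝ) :
    steadyShape D c u' v' = √3 * c ^ 2 / (π * D ^ 2) *
      ∫ u in Iic u', ∫ v in Iic v',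
        shearedGaussian (6 * c ^ 3 / D ^ 2) (c / (2 * D ^ 2)) (1 / (2 * c)) (u, v) := by
  simp only [steadyShape, shearedGaussian]
  congr! 5 with u v
  congr 1
  ring

section RescaledCdf

variable {D c t₀ t : ℝ}

theorem cdf2_rescaled (hD : D ≠ 0) (hc : 0 < c) (ht : t₀ < t) (u' v' : ℝ) :
    cdf2 D t₀ ((c * (t - t₀)) ^ ((1 : ℝ) / 2) * u') ((c * (t - t₀)) ^ ((3 : ℝ) / 2) * v') t =
      rescaledPrefactor D c (t - t₀) * ∫ p in Iic u' ×ˢ Iic v',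
        shearedGaussian (rescaledPrecision D c (t - t₀)) (c / (2 * D ^ 2)) (1 / (2 * c)) p := by
  obtain ⟨τ, hτ, rfl⟩ : ∃ τ, 0 < τ ∧ t = t₀ + τ := ⟨t - t₀, by linarith, by ring⟩
  have hcτ : 0 < c * τ := by positivity
  rw [add_sub_cancel_left, ← sqrt_eq_rpow, rpow_three_halves_eq_mul_sqrt hcτ.le, cdf2,
    integral_Iic_integral_Iic_comp_mul _ (sqrt_pos.2 hcτ) (by positivity),
    setIntegral_prod_shearedGaussian _ (rescaledPrecision_pos hD hc hτ.ne') (by positivity)]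
  simp_rw [mul_shearDensity2_rescaled hD hc.ne' hτ.ne' (sq_sqrt hcτ.le), integral_const_mul]

theorem cdf1_rescaled (hD : D ≠ 0) (hc : 0 < c) (ht : t₀ < t) (u' v' : ℝ) :
    cdf1 D t₀ ((c * (t - t₀)) ^ ((1 : ℝ) / 2) * u') ((c * (t - t₀)) ^ ((3 : ℝ) / 2) * v') t =
      steadyShape D c u' v' := by
  obtain ⟨τ, hτ, rfl⟩ : ∃ τ, 0 < τ ∧ t = t₀ + τ := ⟨t - t₀, by linarith, by ring⟩
  have hcτ : 0 < c * τ := by positivity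
  rw [add_sub_cancel_left, ← sqrt_eq_rpow, rpow_three_halves_eq_mul_sqrt hcτ.le, cdf1,
    integral_Iic_integral_Iic_comp_mul _ (sqrt_pos.2 hcτ) (by positivity),
    steadyShape_eq_integral_shearedGaussian]
  simp_rw [mul_shearDensity1_rescaled hD hc.ne' hτ.ne' (sq_sqrt hcτ.le), integral_const_mul]

end RescaledCdf

/-- Under the rescaling `u = x/(c(t−t₀))^{1/2}`, `v = y/(c(t−t₀))^{3/2}`, the CDF of
the doubly-diffusive shear solution converges pointwise, as `t → ∞`, to the steady
self-similar shape, which coincides with the rescaled CDF of the purely x-diffusive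
self-similar solution. -/
theorem rescaled_cdf_tendsto_steadyShape (D c t₀ : ℝ) (hD : 0 < D) (hc : 0 < c) :
    ∀ u' v' : ℝ,
      Tendsto
        (fun t : ℝ =>
          cdf2 D t₀ ((c * (t - t₀)) ^ ((1 : ℝ) / 2) * u')
            ((c * (t - t₀)) ^ ((3 : ℝ) / 2) * v') t)
        atTop (nhds (steadyShape D c u' v')) ∧
      ∀ t : ℝ, t₀ < t →
        cdf1 D t₀ ((c * (t - t₀)) ^ ((1 : ℝ) / 2) * u')
            ((c * (t - t₀)) ^ ((3 : ℝ) / 2) * v') t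
          = steadyShape D c u' v' := by
  intro u' v'
  refine ⟨?_, fun t ht => cdf1_rescaled hD.ne' hc ht u' v'⟩
  have hσ : 0 < c / (2 * D ^ 2) := by positivity
  have hk : 0 < 6 * c ^ 3 / D ^ 2 := by positivity
  have hshift : Tendsto (fun t => t - t₀) atTop atTop :=
    tendsto_atTop_add_const_right _ _ tendsto_id
  have hlim := ((tendsto_rescaledPrefactor c hD.ne').mul
    ((continuousAt_setIntegral_shearedGaussian (1 / (2 * c)) (Iic u' ×ˢ Iic v') hk hσ).tendsto.comp
      (tendsto_rescaledPrecision c hD.ne'))).comp hshift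
  rw [steadyShape_eq_integral_shearedGaussian, ← setIntegral_prod_shearedGaussian _ hk hσ]
  refine hlim.congr' ?_
  filter_upwards [eventually_gt_atTop t₀] with t ht
  exact (cdf2_rescaled hD.ne' hc ht u' v').symm
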